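/- arXiv:0808.1664 — 7 statements merged into one kernel-verified Lean document; each statement's English description precedes it below -/
import Mathlib

section
/- Let R be a commutative ring in which (4 : R) = 0, let Ṽ be an R-module, let β̃ : Ṽ →ₗ[R] Ṽ →ₗ[R] R be an R-bilinear form, and set ω̃(u,v) = β̃(u,v) − β̃(v,u). Let g : Ṽ →ₗ[R] Ṽ be a linear map satisfying ω̃(g u, g v) = ω̃(u,v) for all u, v ∈ Ṽ, and define α̃ : Ṽ → R by α̃(v) = β̃(g v, g v) − β̃(v, v). Then: (a) α̃(v + 2•x) = α̃(v) for all v, x ∈ Ṽ (so α̃ factors through Ṽ/2Ṽ), and (b) α̃(v₁ + v₂) − α̃(v₁) − α̃(v₂) = 2•β̃(g v₁, g v₂) − 2•β̃(v₁, v₂) for all v₁, v₂ ∈ Ṽ. -/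
/-!
`α̃` is a quadratic form, the difference of `v ↦ β̃(g v, g v)` and `v ↦ β̃(v, v)`, with polar form
`β̃(g u, g v) + β̃(g v, g u) - β̃(u, v) - β̃(v, u)`; invariance of `ω̃` under `g` turns this into
`2 • (β̃(g u, g v) - β̃(u, v))`, which is (b). For (a), `α̃(v + 2x) - α̃(v)` is `α̃(2x) = 4 • α̃(x)`
plus the polar term at `(v, 2x)`, which by (b) is also a multiple of `4 = 0`.
-/

namespace LinearMap.BilinForm

variable {R V : Type*} [CommRing R] [AddCommGroup V] [Module R V]

def isometryDefect (β : LinearMap.BilinForm R V) (g : V →ₗ[R] V) : QuadraticForm R V :=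
  (LinearMap.BilinMap.toQuadraticMap β).comp g - LinearMap.BilinMap.toQuadraticMap β

variable {β : LinearMap.BilinForm R V} {g : V →ₗ[R] V}

theorem isometryDefect_apply (v : V) : β.isometryDefect g v = β (g v) (g v) - β v v := rfl

theorem polar_isometryDefect (u v : V) :
    QuadraticMap.polar (β.isometryDefect g) u v
      = β (g u) (g v) + β (g v) (g u) - (β u v + β v u) := by
  simp only [QuadraticMap.polar, isometryDefect_apply, map_add, LinearMap.add_apply]
  ring

theorem polar_isometryDefect_eq_two_smul_sub
    (hg : ∀ u v : V, β (g u) (g v) - β (g v) (g u) = β u v - β v u) (u v : V) :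
    QuadraticMap.polar (β.isometryDefect g) u v = 2 • β (g u) (g v) - 2 • β u v := by
  rw [polar_isometryDefect]
  linear_combination -hg u v

theorem isometryDefect_add_two_smul (h4 : (4 : R) = 0)
    (hg : ∀ u v : V, β (g u) (g v) - β (g v) (g u) = β u v - β v u) (v x : V) :
    β.isometryDefect g (v + 2 • x) = β.isometryDefect g v := by
  have four_smul (r : R) : 4 • r = 0 := by rw [nsmul_eq_mul, Nat.cast_ofNat, h4, zero_mul]
  have h_double : β.isometryDefect g (2 • x) = 0 := by
    rw [two_smul, QuadraticMap.map_add_self, four_smul]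
  have h_polar : QuadraticMap.polar (β.isometryDefect g) v (2 • x) = 0 := by
    rw [polar_isometryDefect_eq_two_smul_sub hg, map_nsmul, map_nsmul, map_nsmul,
      smul_smul, smul_smul, ← smul_sub]
    exact four_smul _
  rw [← sub_eq_zero, ← h_polar, QuadraticMap.polar, h_double, sub_zero]

end LinearMap.BilinForm

open LinearMap.BilinForm in
/-- For a commutative ring `R` with `4 = 0`, a bilinear form `β̃` on an
`R`-module `Ṽ`, and a linear map `g` preserving `ω̃(u,v) = β̃(u,v) - β̃(v,u)`, the function
`α̃(v) = β̃(g v, g v) - β̃(v, v)` satisfies `α̃(v + 2•x) = α̃(v)` and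
`α̃(v₁+v₂) - α̃(v₁) - α̃(v₂) = 2•β̃(g v₁, g v₂) - 2•β̃(v₁, v₂)`. -/
theorem stmt_0 (R : Type*) [CommRing R] (h4 : (4 : R) = 0)
    (V : Type*) [AddCommGroup V] [Module R V]
    (β : V →ₗ[R] V →ₗ[R] R) (g : V →ₗ[R] V)
    (hg : ∀ u v : V, β (g u) (g v) - β (g v) (g u) = β u v - β v u) :
    (∀ v x : V,
      β (g (v + 2 • x)) (g (v + 2 • x)) - β (v + 2 • x) (v + 2 • x)
        = β (g v) (g v) - β v v) ∧
    (∀ v₁ v₂ : V,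
      (β (g (v₁ + v₂)) (g (v₁ + v₂)) - β (v₁ + v₂) (v₁ + v₂))
          - (β (g v₁) (g v₁) - β v₁ v₁) - (β (g v₂) (g v₂) - β v₂ v₂)
        = 2 • β (g v₁) (g v₂) - 2 • β v₁ v₂) := by
  refine ⟨fun v x => ?_, fun v₁ v₂ => ?_⟩
  · simpa only [isometryDefect_apply] using isometryDefect_add_two_smul h4 hg v x
  · simpa only [QuadraticMap.polar, isometryDefect_apply] using
      polar_isometryDefect_eq_two_smul_sub hg v₁ v₂
end

section
/- (Stone–von Neumann property) With the Heisenberg group H(V) as in the context, there exists a finite-dimensional irreducible complex representation π of H(V) such that π(0, z) = ψ(z) • id for all z ∈ A; moreover, any two finite-dimensional irreducible complex representations π₁, π₂ of H(V) satisfying πᵢ(0, z) = ψ(z) • id for all z ∈ A are isomorphic as representations. -/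
/-!
Existence: the representation of `H(V)` induced from `ψ` on the centre lives on the
finite-dimensional space of functions `V → ℂ`, and a nonzero invariant subspace of minimal
dimension is irreducible.

Uniqueness: if `ψ (ω v u) ≠ 1`, conjugating `π (v, 0)` by `π (u, 0)` multiplies it by that
scalar, so `π (v, 0)` is traceless for `v ≠ 0`. Hence the averaging operator
`S ↦ ∑ᵥ π₂ (v, 0) ∘ S ∘ π₁ (v, 0)⁻¹` on `W₁ →ₗ W₂` has trace
`∑ᵥ tr π₂ (v, 0) · tr π₁ (v, 0)⁻¹ = dim W₁ · dim W₂ ≠ 0`. So some average of a linear map is a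
nonzero intertwiner, which is an isomorphism by Schur's lemma.
-/

open LinearMap Module
open scoped TensorProduct

theorem LinearMap.trace_llcomp_comp_lcomp {K W₁ W₂ : Type*} [Field K]
    [AddCommGroup W₁] [Module K W₁] [FiniteDimensional K W₁]
    [AddCommGroup W₂] [Module K W₂] [FiniteDimensional K W₂]
    (B : W₂ →ₗ[K] W₂) (C : W₁ →ₗ[K] W₁) :
    trace K (W₁ →ₗ[K] W₂) (llcomp K W₁ W₂ W₂ B ∘ₗ lcomp K W₂ C) = trace K W₂ B * trace K W₁ C := by
  have hconj : llcomp K W₁ W₂ W₂ B ∘ₗ lcomp K W₂ C =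
      (dualTensorHomEquiv K W₁ W₂).conj (TensorProduct.map (Dual.transpose C) B) := by
    rw [LinearEquiv.conj_apply, ← LinearEquiv.comp_toLinearMap_symm_eq]
    refine TensorProduct.ext' fun f w => ?_
    ext x
    simp [dualTensorHomEquiv, dualTensorHom_apply, Dual.transpose_apply]
  rw [hconj, trace_conj' (R := K) (M := Dual K W₁ ⊗[K] W₂) (N := W₁ →ₗ[K] W₂),
    trace_tensorProduct', trace_transpose', mul_comm]

theorem LinearMap.trace_eq_zero_of_comp_eq_smul {R M : Type*} [CommRing R] [NoZeroDivisors R]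
    [AddCommGroup M] [Module R M] {P Q X : M →ₗ[R] M} {c : R} (hQP : Q ∘ₗ P = LinearMap.id)
    (h : P ∘ₗ X ∘ₗ Q = c • X) (hc : c ≠ 1) : trace R M X = 0 := by
  have hcX : c * trace R M X = trace R M X :=
    calc c * trace R M X = trace R M (P ∘ₗ X ∘ₗ Q) := by rw [h, map_smul, smul_eq_mul]
      _ = trace R M (Q ∘ₗ P ∘ₗ X) := trace_mul_cycle' R P X Q
      _ = trace R M X := by rw [← comp_assoc, hQP, id_comp]
  have : (c - 1) * trace R M X = 0 := by rw [sub_mul, hcX, one_mul, sub_self]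
  exact (mul_eq_zero.mp this).resolve_left (sub_ne_zero.mpr hc)

section IrreducibleFamily

variable {ι R W W' : Type*}

def IsIrreducibleFamily [Semiring R] [AddCommMonoid W] [Module R W] (π : ι → W →ₗ[R] W) : Prop :=
  ∀ U : Submodule R W, (∀ i, ∀ w ∈ U, π i w ∈ U) → U = ⊥ ∨ U = ⊤

variable [Ring R] [AddCommGroup W] [Module R W] [AddCommGroup W'] [Module R W']

theorem IsIrreducibleFamily.bijective_of_intertwines {π : ι → W →ₗ[R] W} {π' : ι → W' →ₗ[R] W'}
    (h : IsIrreducibleFamily π) (h' : IsIrreducibleFamily π') {T : W →ₗ[R] W'} (hT : T ≠ 0)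
    (hint : ∀ i w, T (π i w) = π' i (T w)) : Function.Bijective T := by
  refine ⟨ker_eq_bot.mp ?_, range_eq_top.mp ?_⟩
  · refine (h (ker T) fun i w hw => ?_).resolve_right fun htop => hT (ker_eq_top.mp htop)
    rw [mem_ker] at hw ⊢
    rw [hint, hw, map_zero]
  · refine (h' (range T) ?_).resolve_left fun hbot => hT (range_eq_bot.mp hbot)
    rintro i _ ⟨w, rfl⟩
    exact ⟨π i w, hint i w⟩

theorem exists_isIrreducibleFamily_restrict [IsArtinian R W] [Nontrivial W] (π : ι → W →ₗ[R] W) :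
    ∃ (U : Submodule R W) (hU : ∀ i, ∀ w ∈ U, π i w ∈ U), U ≠ ⊥ ∧
      IsIrreducibleFamily fun i => (π i).restrict (hU i) := by
  obtain ⟨U, ⟨hU0, hU⟩, hmin⟩ := wellFounded_lt.has_min
    {U : Submodule R W | U ≠ ⊥ ∧ ∀ i, ∀ w ∈ U, π i w ∈ U} ⟨⊤, top_ne_bot, fun _ _ _ => trivial⟩
  refine ⟨U, hU, hU0, fun U' hU' => ?_⟩
  have hinj := Submodule.map_injective_of_injective U.injective_subtype
  by_cases hbot : U'.map U.subtype = ⊥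
  · exact .inl (hinj (by rw [hbot, Submodule.map_bot]))
  refine .inr (hinj ?_)
  rw [Submodule.map_subtype_top]
  refine (U.map_subtype_le U').lt_or_eq.resolve_left fun hlt => hmin _ ⟨hbot, ?_⟩ hlt
  rintro i _ ⟨w, hw, rfl⟩
  exact ⟨_, hU' i w hw, rfl⟩

end IrreducibleFamily

theorem IsIrreducibleFamily.conj {ι R W W' : Type*} [CommRing R] [AddCommGroup W] [Module R W]
    [AddCommGroup W'] [Module R W'] {π : ι → W →ₗ[R] W} (h : IsIrreducibleFamily π)
    (e : W ≃ₗ[R] W') :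
    IsIrreducibleFamily fun i => e.conj (π i) := by
  intro U hU
  have hcomap : ∀ i, ∀ w ∈ U.comap e.toLinearMap, π i w ∈ U.comap e.toLinearMap := by
    intro i w hw
    simpa [LinearEquiv.conj_apply] using hU i (e w) hw
  have hinj := Submodule.comap_injective_of_surjective (f := e.toLinearMap) e.surjective
  refine (h _ hcomap).imp (fun hbot => hinj ?_) (fun htop => hinj ?_)
  · rw [hbot, Submodule.comap_bot, LinearEquiv.ker]
  · rw [htop, Submodule.comap_top]

namespace Heisenberg

variable {K V A W W' : Type*} [Field K] [AddCommGroup V] [AddCommGroup A]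
  [AddCommGroup W] [Module K W] [AddCommGroup W'] [Module K W']
  {β : V →+ V →+ A} {ψ : AddChar A K}

/-- `π` is a representation of the Heisenberg group `V × A` of `β` on which the centre
`{0} × A` acts through `ψ`. -/
structure IsRep (β : V →+ V →+ A) (ψ : AddChar A K) (π : V × A → W →ₗ[K] W) : Prop where
  map_mul : ∀ (v₁ : V) (z₁ : A) (v₂ : V) (z₂ : A),
    π (v₁ + v₂, z₁ + z₂ + β v₁ v₂) = π (v₁, z₁) ∘ₗ π (v₂, z₂)
  map_central : ∀ z : A, π (0, z) = ψ z • LinearMap.id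

namespace IsRep

variable {π : V × A → W →ₗ[K] W} (hπ : IsRep β ψ π)
include hπ

theorem smul_eq_map_add (v : V) (a b : A) : ψ a • π (v, b) = π (v, a + b) := by
  simpa [hπ.map_central, smul_comp] using (hπ.map_mul 0 a v b).symm

theorem map_zero_zero : π (0, 0) = LinearMap.id := by
  simp [hπ.map_central]

theorem map_eq_smul (v : V) (z : A) : π (v, z) = ψ z • π (v, 0) := by
  rw [hπ.smul_eq_map_add, add_zero]

theorem comp_map_neg (v : V) : π (v, 0) ∘ₗ π (-v, β v v) = LinearMap.id := by
  rw [← hπ.map_mul, ← hπ.map_zero_zero]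
  simp

theorem map_neg_comp (v : V) : π (-v, β v v) ∘ₗ π (v, 0) = LinearMap.id := by
  rw [← hπ.map_mul, ← hπ.map_zero_zero]
  simp

theorem comp_comm (u v : V) :
    π (v, 0) ∘ₗ π (u, 0) = ψ (β v u - β u v) • (π (u, 0) ∘ₗ π (v, 0)) := by
  rw [← hπ.map_mul, ← hπ.map_mul, hπ.smul_eq_map_add]
  congr 1
  ext <;> simp [add_comm]

theorem trace_eq_zero [FiniteDimensional K W] (hnd : ∀ v ≠ 0, ∃ u, ψ (β v u - β u v) ≠ 1)
    {v : V} (hv : v ≠ 0) : trace K W (π (v, 0)) = 0 := by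
  obtain ⟨u, hu⟩ := hnd v hv
  refine trace_eq_zero_of_comp_eq_smul (hπ.comp_map_neg u) ?_ hu
  rw [hπ.comp_comm, comp_smul, ← comp_assoc, hπ.map_neg_comp, id_comp]

theorem restrict {U : Submodule K W} (hU : ∀ g, ∀ w ∈ U, π g w ∈ U) :
    IsRep β ψ fun g => (π g).restrict (hU g) where
  map_mul v₁ z₁ v₂ z₂ := by
    ext w
    simp [hπ.map_mul]
  map_central z := by
    ext w
    simp [hπ.map_central]

theorem conj (e : W ≃ₗ[K] W') : IsRep β ψ fun g => e.conj (π g) where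
  map_mul v₁ z₁ v₂ z₂ := by rw [hπ.map_mul, LinearEquiv.conj_comp]
  map_central z := by rw [hπ.map_central, map_smul, LinearEquiv.conj_id]

end IsRep

/-- The representation induced from the character `ψ` of the centre, realised on functions
on `V`. -/
def inducedRep (β : V →+ V →+ A) (ψ : AddChar A K) (g : V × A) : (V → K) →ₗ[K] (V → K) where
  toFun f x := ψ g.2 * ψ (β x g.1) * f (x + g.1)
  map_add' f f' := by ext x; simp [mul_add]
  map_smul' c f := by ext x; simp [mul_left_comm]

theorem isRep_inducedRep : IsRep β ψ (inducedRep β ψ) where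
  map_mul v₁ z₁ v₂ z₂ := by
    ext f x
    simp only [inducedRep, coe_mk, AddHom.coe_mk, comp_apply, map_add, AddMonoidHom.add_apply,
      AddChar.map_add_eq_mul, add_assoc]
    ring
  map_central z := by
    ext f x
    simp [inducedRep]

variable (β ψ) in
theorem exists_isRep_isIrreducibleFamily [Finite V] :
    ∃ (k : ℕ) (π : V × A → (Fin k → K) →ₗ[K] (Fin k → K)),
      0 < k ∧ IsRep β ψ π ∧ IsIrreducibleFamily π := by
  obtain ⟨U, hU, hU0, hirr⟩ := exists_isIrreducibleFamily_restrict (inducedRep β ψ)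
  have : Nontrivial U := Submodule.nontrivial_iff_ne_bot.mpr hU0
  let e := (finBasis K U).equivFun
  exact ⟨_, _, finrank_pos, (isRep_inducedRep.restrict hU).conj e, hirr.conj e⟩

/-- `S ↦ ∑ᵥ π' (v, 0) ∘ S ∘ π (v, 0)⁻¹`, where `(-v, β v v)` is the inverse of `(v, 0)`. -/
def average [Fintype V] (β : V →+ V →+ A) (π : V × A → W →ₗ[K] W) (π' : V × A → W' →ₗ[K] W') :
    (W →ₗ[K] W') →ₗ[K] (W →ₗ[K] W') :=
  ∑ v, llcomp K W W' W' (π' (v, 0)) ∘ₗ lcomp K W' (π (-v, β v v))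

namespace IsRep

variable {π : V × A → W →ₗ[K] W} (hπ : IsRep β ψ π)
  {π' : V × A → W' →ₗ[K] W'} (hπ' : IsRep β ψ π')
include hπ hπ'

theorem average_map_apply [Fintype V] (S : W →ₗ[K] W') (g : V × A) (w : W) :
    average β π π' S (π g w) = π' g (average β π π' S w) := by
  obtain ⟨u, z⟩ := g
  suffices h : average β π π' S (π (u, 0) w) = π' (u, 0) (average β π π' S w) by
    rw [hπ.map_eq_smul, hπ'.map_eq_smul, LinearMap.smul_apply, LinearMap.smul_apply, map_smul, h]
  have hshift (v : V) :
      π (-(u + v), β (u + v) (u + v)) ∘ₗ π (u, 0) = ψ (β u v) • π (-v, β v v) := by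
    rw [← hπ.map_mul, hπ.smul_eq_map_add]
    congr 1
    ext <;> simp only [map_add, map_neg, AddMonoidHom.add_apply, AddMonoidHom.neg_apply] <;> abel
  have hmul (v : V) : π' (u, 0) ∘ₗ π' (v, 0) = ψ (β u v) • π' (u + v, 0) := by
    rw [← hπ'.map_mul, hπ'.map_eq_smul, zero_add, zero_add]
  simp only [average, LinearMap.sum_apply, comp_apply, llcomp_apply, lcomp_apply, map_sum]
  rw [← Equiv.sum_comp (Equiv.addLeft u)]
  refine Finset.sum_congr rfl fun v _ => ?_
  have h₁ := LinearMap.congr_fun (hshift v) w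
  have h₂ := LinearMap.congr_fun (hmul v) (S (π (-v, β v v) w))
  simp only [comp_apply, LinearMap.smul_apply] at h₁ h₂
  simp only [Equiv.coe_addLeft, h₁, h₂, map_smul]

theorem trace_average [Fintype V] [FiniteDimensional K W] [FiniteDimensional K W']
    (hnd : ∀ v ≠ 0, ∃ u, ψ (β v u - β u v) ≠ 1) :
    trace K (W →ₗ[K] W') (average β π π') = finrank K W' * finrank K W := by
  rw [average, map_sum, Finset.sum_eq_single 0]
  · simp [trace_llcomp_comp_lcomp, hπ.map_zero_zero, hπ'.map_zero_zero]
  · intro v _ hv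
    rw [trace_llcomp_comp_lcomp, hπ'.trace_eq_zero hnd hv, zero_mul]
  · simp

theorem exists_linearEquiv_intertwines [Fintype V] [CharZero K] [FiniteDimensional K W]
    [FiniteDimensional K W'] [Nontrivial W] [Nontrivial W']
    (hnd : ∀ v ≠ 0, ∃ u, ψ (β v u - β u v) ≠ 1)
    (hirr : IsIrreducibleFamily π) (hirr' : IsIrreducibleFamily π') :
    ∃ T : W ≃ₗ[K] W', ∀ g w, T (π g w) = π' g (T w) := by
  have hne : average β π π' ≠ 0 := by
    intro h
    have := hπ.trace_average hπ' hnd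
    rw [h, map_zero] at this
    exact mul_ne_zero (Nat.cast_ne_zero.mpr finrank_pos.ne') (Nat.cast_ne_zero.mpr finrank_pos.ne')
      this.symm
  obtain ⟨S, hS⟩ : ∃ S, average β π π' S ≠ 0 := by
    by_contra! h
    exact hne (LinearMap.ext h)
  exact ⟨.ofBijective _ (hirr.bijective_of_intertwines hirr' hS (hπ.average_map_apply hπ' S)),
    hπ.average_map_apply hπ' S⟩

end IsRep

end Heisenberg

theorem stmt_2_general (V A : Type) [AddCommGroup V] [Fintype V] [AddCommGroup A]
    (β : V → V → A)
    (hβ₁ : ∀ u u' v : V, β (u + u') v = β u v + β u' v)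
    (hβ₂ : ∀ u v v' : V, β u (v + v') = β u v + β u v')
    (ψ : A → ℂˣ) (hψmul : ∀ a b : A, ψ (a + b) = ψ a * ψ b)
    (hnd : ∀ v : V, v ≠ 0 → ∃ u : V, ψ (β v u - β u v) ≠ 1)
    (W₁ W₂ : Type) [AddCommGroup W₁] [Module ℂ W₁] [FiniteDimensional ℂ W₁]
    [AddCommGroup W₂] [Module ℂ W₂] [FiniteDimensional ℂ W₂] :
    -- existence
    (∃ (k : ℕ) (π : V × A → ((Fin k → ℂ) →ₗ[ℂ] (Fin k → ℂ))),
      0 < k ∧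
      π (0, 0) = LinearMap.id ∧
      (∀ (v₁ : V) (z₁ : A) (v₂ : V) (z₂ : A),
        π (v₁ + v₂, z₁ + z₂ + β v₁ v₂) = π (v₁, z₁) ∘ₗ π (v₂, z₂)) ∧
      (∀ U : Submodule ℂ (Fin k → ℂ),
        (∀ (h : V × A), ∀ w ∈ U, π h w ∈ U) → U = ⊥ ∨ U = ⊤) ∧
      (∀ z : A, π (0, z) = ((ψ z : ℂ)) • LinearMap.id)) ∧
    -- uniqueness
    (∀ (π₁ : V × A → (W₁ →ₗ[ℂ] W₁)) (π₂ : V × A → (W₂ →ₗ[ℂ] W₂)),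
      (∃ w : W₁, w ≠ 0) → (∃ w : W₂, w ≠ 0) →
      π₁ (0, 0) = LinearMap.id → π₂ (0, 0) = LinearMap.id →
      (∀ (v₁ : V) (z₁ : A) (v₂ : V) (z₂ : A),
        π₁ (v₁ + v₂, z₁ + z₂ + β v₁ v₂) = π₁ (v₁, z₁) ∘ₗ π₁ (v₂, z₂)) →
      (∀ (v₁ : V) (z₁ : A) (v₂ : V) (z₂ : A),
        π₂ (v₁ + v₂, z₁ + z₂ + β v₁ v₂) = π₂ (v₁, z₁) ∘ₗ π₂ (v₂, z₂)) →
      (∀ U : Submodule ℂ W₁, (∀ (h : V × A), ∀ w ∈ U, π₁ h w ∈ U) → U = ⊥ ∨ U = ⊤) →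
      (∀ U : Submodule ℂ W₂, (∀ (h : V × A), ∀ w ∈ U, π₂ h w ∈ U) → U = ⊥ ∨ U = ⊤) →
      (∀ z : A, π₁ (0, z) = ((ψ z : ℂ)) • LinearMap.id) →
      (∀ z : A, π₂ (0, z) = ((ψ z : ℂ)) • LinearMap.id) →
      ∃ T : W₁ ≃ₗ[ℂ] W₂, ∀ (h : V × A) (w : W₁), T (π₁ h w) = π₂ h (T w)) := by
  let B : V →+ V →+ A :=
    AddMonoidHom.mk' (fun u => AddMonoidHom.mk' (β u) (hβ₂ u)) fun u u' =>
      AddMonoidHom.ext (hβ₁ u u')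
  let χ : AddChar A ℂ :=
    { toFun z := ψ z
      map_zero_eq_one' := by simpa using hψmul 0 0
      map_add_eq_mul' a b := by simp [hψmul] }
  have hχ : ∀ v ≠ 0, ∃ u, χ (B v u - B u v) ≠ 1 := fun v hv =>
    (hnd v hv).imp fun _ hu => mt Units.val_eq_one.mp hu
  refine ⟨?_, fun π₁ π₂ ⟨w₁, hw₁⟩ ⟨w₂, hw₂⟩ _ _ hmul₁ hmul₂ hirr₁ hirr₂ hcc₁ hcc₂ => ?_⟩
  · obtain ⟨k, π, hk, hπ, hirr⟩ := Heisenberg.exists_isRep_isIrreducibleFamily B χ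
    exact ⟨k, π, hk, hπ.map_zero_zero, hπ.map_mul, hirr, hπ.map_central⟩
  · have : Nontrivial W₁ := nontrivial_of_ne w₁ 0 hw₁
    have : Nontrivial W₂ := nontrivial_of_ne w₂ 0 hw₂
    exact Heisenberg.IsRep.exists_linearEquiv_intertwines (β := B) (ψ := χ) ⟨hmul₁, hcc₁⟩
      ⟨hmul₂, hcc₂⟩ hχ hirr₁ hirr₂

/-- Stone–von Neumann property.  For finite abelian groups `V`, `A`, a
biadditive `β : V → V → A`, an injective character `ψ : A → ℂˣ` such that the pairing
`ψ(ω(·,·))` is nondegenerate, the Heisenberg group `H(V) = V × A` (with multiplication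
`(v₁,z₁)·(v₂,z₂) = (v₁+v₂, z₁+z₂+β v₁ v₂)`) admits a finite-dimensional irreducible complex
representation with central character `ψ`, and any two such representations are isomorphic. -/
theorem stmt_2 (V A : Type) [AddCommGroup V] [Fintype V] [AddCommGroup A] [Fintype A]
    (β : V → V → A)
    (hβ₁ : ∀ u u' v : V, β (u + u') v = β u v + β u' v)
    (hβ₂ : ∀ u v v' : V, β u (v + v') = β u v + β u v')
    (ψ : A → ℂˣ) (hψmul : ∀ a b : A, ψ (a + b) = ψ a * ψ b)
    (hψinj : Function.Injective ψ)
    (hnd : ∀ v : V, v ≠ 0 → ∃ u : V, ψ (β v u - β u v) ≠ 1)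
    (W₁ W₂ : Type) [AddCommGroup W₁] [Module ℂ W₁] [FiniteDimensional ℂ W₁]
    [AddCommGroup W₂] [Module ℂ W₂] [FiniteDimensional ℂ W₂] :
    -- existence
    (∃ (k : ℕ) (π : V × A → ((Fin k → ℂ) →ₗ[ℂ] (Fin k → ℂ))),
      0 < k ∧
      π (0, 0) = LinearMap.id ∧
      (∀ (v₁ : V) (z₁ : A) (v₂ : V) (z₂ : A),
        π (v₁ + v₂, z₁ + z₂ + β v₁ v₂) = π (v₁, z₁) ∘ₗ π (v₂, z₂)) ∧
      (∀ U : Submodule ℂ (Fin k → ℂ),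
        (∀ (h : V × A), ∀ w ∈ U, π h w ∈ U) → U = ⊥ ∨ U = ⊤) ∧
      (∀ z : A, π (0, z) = ((ψ z : ℂ)) • LinearMap.id)) ∧
    -- uniqueness
    (∀ (π₁ : V × A → (W₁ →ₗ[ℂ] W₁)) (π₂ : V × A → (W₂ →ₗ[ℂ] W₂)),
      (∃ w : W₁, w ≠ 0) → (∃ w : W₂, w ≠ 0) →
      π₁ (0, 0) = LinearMap.id → π₂ (0, 0) = LinearMap.id →
      (∀ (v₁ : V) (z₁ : A) (v₂ : V) (z₂ : A),
        π₁ (v₁ + v₂, z₁ + z₂ + β v₁ v₂) = π₁ (v₁, z₁) ∘ₗ π₁ (v₂, z₂)) →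
      (∀ (v₁ : V) (z₁ : A) (v₂ : V) (z₂ : A),
        π₂ (v₁ + v₂, z₁ + z₂ + β v₁ v₂) = π₂ (v₁, z₁) ∘ₗ π₂ (v₂, z₂)) →
      (∀ U : Submodule ℂ W₁, (∀ (h : V × A), ∀ w ∈ U, π₁ h w ∈ U) → U = ⊥ ∨ U = ⊤) →
      (∀ U : Submodule ℂ W₂, (∀ (h : V × A), ∀ w ∈ U, π₂ h w ∈ U) → U = ⊥ ∨ U = ⊤) →
      (∀ z : A, π₁ (0, z) = ((ψ z : ℂ)) • LinearMap.id) →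
      (∀ z : A, π₂ (0, z) = ((ψ z : ℂ)) • LinearMap.id) →
      ∃ T : W₁ ≃ₗ[ℂ] W₂, ∀ (h : V × A) (w : W₁), T (π₁ h w) = π₂ h (T w)) :=
  stmt_2_general V A β hβ₁ hβ₂ ψ hψmul hnd W₁ W₂
end

section
/- Let S be a type, 𝓗 : S → Type a family of complex vector spaces, U : S → S → Prop a symmetric relation, and for every pair (M, L) with U M L let T_{M,L} : 𝓗 L ≃ₗ[ℂ] 𝓗 M be a linear isomorphism. Assume: (i) whenever U N M, U M L and U N L all hold, T_{N,M} ∘ T_{M,L} = T_{N,L}; (ii) for every finite subset F of S there exists M ∈ S with U M L for every L ∈ F. Then there exists a unique family of linear maps T'_{M,L} : 𝓗 L →ₗ[ℂ] 𝓗 M, indexed by all pairs (M, L) ∈ S × S, such that T'_{M,L} = T_{M,L} whenever U M L, and T'_{N,M} ∘ T'_{M,L} = T'_{N,L} for all N, M, L ∈ S. -/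
/-!
Fix, for every pair `M, L`, a common `U`-neighbour `p` and put `T'_{M,L} = T_{p,M}⁻¹ ∘ T_{p,L}`.
Multiplicativity on `U`-triples makes this independent of `p`: compare two choices through a
common neighbour of all the points involved. Restriction and multiplicativity of `T'` then follow
by evaluating with a neighbour common to all indices. Conversely any multiplicative extension
`T''` has `T''_{M,M} = id` (it is an idempotent that becomes `T_{p,M}` after composing with the
invertible `T_{p,M}`), hence `T''_{M,p} = T_{p,M}⁻¹` and `T''_{M,L} = T''_{M,p} ∘ T''_{p,L}` is
forced.
-/

namespace PartialTransferSystem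

variable {R S : Type*} [Semiring R] {H : S → Type*} [∀ s, AddCommMonoid (H s)]
  [∀ s, Module R (H s)] {U : S → S → Prop} (T : ∀ M L : S, U M L → (H L ≃ₗ[R] H M))

section Extension

variable (hcofinal : ∀ F : Finset S, ∃ m : S, ∀ l ∈ F, U m l)

include hcofinal in
theorem exists_common_neighbour (M L : S) : ∃ p, U p M ∧ U p L := by
  classical
  obtain ⟨p, hp⟩ := hcofinal {M, L}
  exact ⟨p, hp M (by simp), hp L (by simp)⟩

noncomputable def extension (M L : S) : H L →ₗ[R] H M :=
  let hp := exists_common_neighbour hcofinal M L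
  (T hp.choose M hp.choose_spec.1).symm.toLinearMap ∘ₗ (T hp.choose L hp.choose_spec.2)

variable (hT : ∀ (n m l : S) (h₁ : U n m) (h₂ : U m l) (h₃ : U n l),
  ∀ x : H l, T n m h₁ (T m l h₂ x) = T n l h₃ x)
include hT

theorem symm_apply_eq_symm_apply_of_rel {p m M L : S} (hpm : U p m) (hmM : U m M) (hmL : U m L)
    (hpM : U p M) (hpL : U p L) (x : H L) :
    (T m M hmM).symm (T m L hmL x) = (T p M hpM).symm (T p L hpL x) := by
  apply (T p M hpM).injective
  rw [LinearEquiv.apply_symm_apply, ← hT p m M hpm hmM hpM, LinearEquiv.apply_symm_apply,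
    hT p m L hpm hmL hpL]

include hcofinal in
theorem symm_apply_eq_symm_apply {m n M L : S} (hmM : U m M) (hmL : U m L) (hnM : U n M)
    (hnL : U n L) (x : H L) :
    (T m M hmM).symm (T m L hmL x) = (T n M hnM).symm (T n L hnL x) := by
  classical
  obtain ⟨p, hp⟩ := hcofinal {m, n, M, L}
  rw [symm_apply_eq_symm_apply_of_rel T hT (hp m (by simp)) hmM hmL (hp M (by simp)) (hp L (by simp)),
    symm_apply_eq_symm_apply_of_rel T hT (hp n (by simp)) hnM hnL (hp M (by simp)) (hp L (by simp))]

theorem extension_apply {p M L : S} (hpM : U p M) (hpL : U p L) (x : H L) :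
    extension T hcofinal M L x = (T p M hpM).symm (T p L hpL x) :=
  symm_apply_eq_symm_apply T hcofinal hT _ _ _ _ x

theorem extension_eq {M L : S} (h : U M L) : extension T hcofinal M L = T M L h := by
  obtain ⟨p, hpM, hpL⟩ := exists_common_neighbour hcofinal M L
  ext x
  rw [extension_apply T hcofinal hT hpM hpL, LinearEquiv.coe_coe, LinearEquiv.symm_apply_eq,
    hT p M L hpM h hpL]

theorem extension_apply_extension (n m l : S) (x : H l) :
    extension T hcofinal n m (extension T hcofinal m l x) = extension T hcofinal n l x := by
  classical
  obtain ⟨p, hp⟩ := hcofinal {n, m, l}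
  have hpn : U p n := hp n (by simp)
  have hpm : U p m := hp m (by simp)
  have hpl : U p l := hp l (by simp)
  rw [extension_apply T hcofinal hT hpm hpl, extension_apply T hcofinal hT hpn hpm,
    extension_apply T hcofinal hT hpn hpl, LinearEquiv.apply_symm_apply]

end Extension

section Uniqueness

variable {T} {T'' : ∀ M L : S, H L →ₗ[R] H M}
  (hres : ∀ (m l : S) (h : U m l), T'' m l = (T m l h : H l →ₗ[R] H m))
  (hmul : ∀ (n m l : S) (x : H l), T'' n m (T'' m l x) = T'' n l x)
include hres hmul

theorem apply_self_of_isExtension {p M : S} (hpM : U p M) (x : H M) : T'' M M x = x := by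
  have h := hmul p M M x
  rw [hres p M hpM] at h
  exact (T p M hpM).injective h

theorem apply_eq_symm_of_isExtension {p M : S} (hpM : U p M) (y : H p) :
    T'' M p y = (T p M hpM).symm y := by
  calc T'' M p y = T'' M p (T'' p M ((T p M hpM).symm y)) := by
        rw [hres p M hpM, LinearEquiv.coe_coe, LinearEquiv.apply_symm_apply]
    _ = (T p M hpM).symm y := by rw [hmul, apply_self_of_isExtension hres hmul hpM]

theorem apply_eq_of_isExtension {p M L : S} (hpM : U p M) (hpL : U p L) (x : H L) :
    T'' M L x = (T p M hpM).symm (T p L hpL x) := by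
  rw [← hmul M p L, apply_eq_symm_of_isExtension hres hmul hpM, hres p L hpL,
    LinearEquiv.coe_coe]

end Uniqueness

end PartialTransferSystem

open PartialTransferSystem in
theorem stmt_7_general (S : Type*) (H : S → Type*)
    [∀ s, AddCommGroup (H s)] [∀ s, Module ℂ (H s)]
    (U : S → S → Prop)
    (T : ∀ M L : S, U M L → (H L ≃ₗ[ℂ] H M))
    (hT : ∀ (n m l : S) (h₁ : U n m) (h₂ : U m l) (h₃ : U n l),
      ∀ x : H l, T n m h₁ (T m l h₂ x) = T n l h₃ x)
    (hcofinal : ∀ F : Finset S, ∃ m : S, ∀ l ∈ F, U m l) :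
    ∃! T' : ∀ M L : S, H L →ₗ[ℂ] H M,
      (∀ (m l : S) (h : U m l), T' m l = (T m l h : H l →ₗ[ℂ] H m)) ∧
      (∀ (n m l : S) (x : H l), T' n m (T' m l x) = T' n l x) := by
  refine ⟨extension T hcofinal, ⟨fun m l h => extension_eq T hcofinal hT h,
    extension_apply_extension T hcofinal hT⟩, ?_⟩
  rintro T'' ⟨hres, hmul⟩
  funext M L
  ext x
  obtain ⟨p, hpM, hpL⟩ := exists_common_neighbour hcofinal M L
  rw [apply_eq_of_isExtension hres hmul hpM hpL, extension_apply T hcofinal hT hpM hpL]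

/-- A partial multiplicative system of intertwining isomorphisms
`T_{M,L} : 𝓗 L ≃ₗ[ℂ] 𝓗 M`, defined for pairs in a symmetric relation `U` satisfying the
multiplicativity condition on `U`-triples and a cofinality condition, extends uniquely to a
multiplicative system of linear maps defined for all pairs. -/
theorem stmt_7 (S : Type*) (H : S → Type*)
    [∀ s, AddCommGroup (H s)] [∀ s, Module ℂ (H s)]
    (U : S → S → Prop) (hUsymm : ∀ a b : S, U a b → U b a)
    (T : ∀ M L : S, U M L → (H L ≃ₗ[ℂ] H M))
    (hT : ∀ (n m l : S) (h₁ : U n m) (h₂ : U m l) (h₃ : U n l),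
      ∀ x : H l, T n m h₁ (T m l h₂ x) = T n l h₃ x)
    (hcofinal : ∀ F : Finset S, ∃ m : S, ∀ l ∈ F, U m l) :
    ∃! T' : ∀ M L : S, H L →ₗ[ℂ] H M,
      (∀ (m l : S) (h : U m l), T' m l = (T m l h : H l →ₗ[ℂ] H m)) ∧
      (∀ (n m l : S) (x : H l), T' n m (T' m l x) = T' n l x) :=
  stmt_7_general S H U T hT hcofinal
end

section
/- Let n : ℕ and let A be a symmetric n×n matrix over ℤ/4ℤ with IsUnit A.det. Then there exist natural numbers n₁, n₂, n₃, n₄ with n = n₁ + n₂ + 2·n₃ + 2·n₄ such that A is congruent to the block-diagonal matrix consisting of n₁ diagonal entries equal to 1, n₂ diagonal entries equal to 3 (= −1), n₃ blocks equal to H, and n₄ blocks equal to M₂. -/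
/-!
A symmetric matrix with unit determinant splits off an orthogonal summand, via a Schur
complement, along any principal block with unit determinant. Over the local ring ℤ/4ℤ: if some
diagonal entry is a unit, it is `1` or `3` and gives a `1 × 1` summand. Otherwise reduction
modulo `2` shows that some off-diagonal entry `A i j` is a unit; the `2 × 2` block on `{i, j}`
then has unit determinant, and a finite search shows that it is congruent to `H` or `M₂`.
Induction on the size finishes the proof, since the direct sum of two standard forms is
congruent to a standard form.
-/
open Matrix

/-- The hyperbolic plane `H = ![![0,1],![1,0]]` over `ℤ/4ℤ`. -/
def Hm : Matrix (Fin 2) (Fin 2) (ZMod 4) := !![0, 1; 1, 0]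

/-- The block `M₂ = ![![2,1],![1,2]]` over `ℤ/4ℤ`. -/
def M2 : Matrix (Fin 2) (Fin 2) (ZMod 4) := !![2, 1; 1, 2]

/-- The block-diagonal standard form with `n₁` entries `1`, `n₂` entries `3 = -1`,
`n₃` blocks `H` and `n₄` blocks `M₂`. -/
def standardForm (n₁ n₂ n₃ n₄ : ℕ) :
    Matrix ((Fin n₁ ⊕ Fin n₂) ⊕ ((Fin 2 × Fin n₃) ⊕ (Fin 2 × Fin n₄)))
           ((Fin n₁ ⊕ Fin n₂) ⊕ ((Fin 2 × Fin n₃) ⊕ (Fin 2 × Fin n₄))) (ZMod 4) :=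
  Matrix.fromBlocks
    (Matrix.fromBlocks 1 0 0 ((3 : ZMod 4) • (1 : Matrix (Fin n₂) (Fin n₂) (ZMod 4))))
    0 0
    (Matrix.fromBlocks (Matrix.blockDiagonal fun _ : Fin n₃ => Hm) 0 0
      (Matrix.blockDiagonal fun _ : Fin n₄ => M2))

namespace Matrix

variable {R : Type*} [CommRing R] {l m n : Type*}

def Congruent [Fintype m] [DecidableEq m] (A : Matrix m m R) (B : Matrix n n R) : Prop :=
  ∃ (e : m ≃ n) (P : Matrix m m R), IsUnit P.det ∧ Pᵀ * A * P = B.submatrix e e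

section Congruent

variable [Fintype m] [DecidableEq m]

theorem Congruent.of_submatrix_eq {A : Matrix m m R} {B : Matrix n n R} (e : m ≃ n)
    (h : B.submatrix e e = A) : Congruent A B :=
  ⟨e, 1, by simp, by simp [h]⟩

theorem Congruent.trans [Fintype n] [DecidableEq n] {A : Matrix m m R} {B : Matrix n n R}
    {C : Matrix l l R} (hAB : Congruent A B) (hBC : Congruent B C) : Congruent A C := by
  obtain ⟨e, P, hP, hAB⟩ := hAB
  obtain ⟨f, Q, hQ, hBC⟩ := hBC
  refine ⟨e.trans f, P * Q.submatrix e e, ?_, ?_⟩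
  · rw [det_mul, det_submatrix_equiv_self]
    exact hP.mul hQ
  · calc (P * Q.submatrix e e)ᵀ * A * (P * Q.submatrix e e)
        = Qᵀ.submatrix e e * (Pᵀ * A * P) * Q.submatrix e e := by
          simp only [transpose_mul, transpose_submatrix, Matrix.mul_assoc]
      _ = (Qᵀ * B * Q).submatrix e e := by rw [hAB, submatrix_mul_equiv, submatrix_mul_equiv]
      _ = C.submatrix (e.trans f) (e.trans f) := by rw [hBC, submatrix_submatrix]; rfl

theorem Congruent.isSymm {A : Matrix m m R} {B : Matrix n n R} (h : Congruent A B)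
    (hA : A.IsSymm) : B.IsSymm := by
  obtain ⟨e, P, -, hPAP⟩ := h
  rw [← isSymm_reindex_iff e.symm, reindex_apply, Equiv.symm_symm, ← hPAP]
  simp only [IsSymm, transpose_mul, transpose_transpose, hA.eq, Matrix.mul_assoc]

theorem Congruent.isUnit_det [Fintype n] [DecidableEq n] {A : Matrix m m R} {B : Matrix n n R}
    (h : Congruent A B) (hA : IsUnit A.det) : IsUnit B.det := by
  obtain ⟨e, P, hP, hPAP⟩ := h
  rw [← det_submatrix_equiv_self e, ← hPAP, det_mul, det_mul, det_transpose]
  exact (hP.mul hA).mul hP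

variable [Fintype n] [DecidableEq n]

theorem Congruent.fromBlocks {m' n' : Type*} [Fintype m'] [DecidableEq m']
    {A : Matrix m m R} {A' : Matrix m' m' R} {B : Matrix n n R} {B' : Matrix n' n' R}
    (hA : Congruent A A') (hB : Congruent B B') :
    Congruent (fromBlocks A 0 0 B) (fromBlocks A' 0 0 B') := by
  obtain ⟨e, P, hP, hPAP⟩ := hA
  obtain ⟨f, Q, hQ, hQBQ⟩ := hB
  refine ⟨e.sumCongr f, Matrix.fromBlocks P 0 0 Q, ?_, ?_⟩
  · rw [det_fromBlocks_zero₁₂]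
    exact hP.mul hQ
  · rw [fromBlocks_transpose, fromBlocks_multiply, fromBlocks_multiply]
    ext (i | i) (j | j) <;> simp [hPAP, hQBQ]

theorem congruent_fromBlocks_interchange {n' : Type*} [Fintype l] [DecidableEq l]
    [Fintype n'] [DecidableEq n']
    (A : Matrix l l R) (B : Matrix m m R) (C : Matrix n n R) (D : Matrix n' n' R) :
    Congruent (fromBlocks (fromBlocks A 0 0 B) 0 0 (fromBlocks C 0 0 D))
      (fromBlocks (fromBlocks A 0 0 C) 0 0 (fromBlocks B 0 0 D)) :=
  .of_submatrix_eq (Equiv.sumSumSumComm l m n n') <| by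
    ext ((i | i) | (i | i)) ((j | j) | (j | j)) <;> rfl

theorem congruent_fromBlocks_schur (a : Matrix m m R) (b : Matrix m n R) (d : Matrix n n R)
    (ha : a.IsSymm) (had : IsUnit a.det) :
    Congruent (fromBlocks a b bᵀ d) (fromBlocks a 0 0 (d - bᵀ * a⁻¹ * b)) := by
  let := invertibleOfIsUnitDet a had
  set U := fromBlocks (1 : Matrix m m R) (a⁻¹ * b) 0 (1 : Matrix n n R)
  set V := fromBlocks (1 : Matrix m m R) (-(a⁻¹ * b)) 0 (1 : Matrix n n R)
  have hUV : U * V = 1 := by simp [U, V, fromBlocks_multiply, fromBlocks_one]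
  have hLU : fromBlocks (1 : Matrix m m R) 0 (bᵀ * a⁻¹) (1 : Matrix n n R) = Uᵀ := by
    simp [U, fromBlocks_transpose, transpose_nonsing_inv, ha.eq]
  refine ⟨Equiv.refl _, V, by simp [V], ?_⟩
  rw [fromBlocks_eq_of_invertible₁₁, invOf_eq_nonsing_inv, hLU, Equiv.coe_refl, submatrix_id_id]
  set D := fromBlocks a 0 0 (d - bᵀ * a⁻¹ * b)
  calc Vᵀ * (Uᵀ * D * U) * V = (U * V)ᵀ * D * (U * V) := by
        simp only [transpose_mul, Matrix.mul_assoc]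
    _ = D := by rw [hUV, transpose_one, Matrix.one_mul, Matrix.mul_one]

end Congruent

section Split

variable {α β : Type*} [Fintype α] [DecidableEq α] [Fintype β] [DecidableEq β]
  [Fintype m] [DecidableEq m]

theorem exists_congruent_fromBlocks_submatrix {A : Matrix m m R} (hA : A.IsSymm)
    (hdet : IsUnit A.det) (e : α ⊕ β ≃ m)
    (ha : IsUnit (A.submatrix (e ∘ Sum.inl) (e ∘ Sum.inl)).det) :
    ∃ S : Matrix β β R, S.IsSymm ∧ IsUnit S.det ∧
      Congruent A (fromBlocks (A.submatrix (e ∘ Sum.inl) (e ∘ Sum.inl)) 0 0 S) := by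
  set B := A.submatrix e e
  have hB : (fromBlocks B.toBlocks₁₁ B.toBlocks₁₂ B.toBlocks₂₁ B.toBlocks₂₂).IsSymm := by
    rw [fromBlocks_toBlocks]
    exact hA.submatrix e
  obtain ⟨ha_symm, hbc, -, -⟩ := isSymm_fromBlocks_iff.mp hB
  have hcong : Congruent A (fromBlocks B.toBlocks₁₁ 0 0
      (B.toBlocks₂₂ - B.toBlocks₁₂ᵀ * B.toBlocks₁₁⁻¹ * B.toBlocks₁₂)) := by
    refine (Congruent.of_submatrix_eq (B := B) e.symm ?_).trans ?_
    · rw [submatrix_submatrix, Equiv.self_comp_symm, submatrix_id_id]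
    rw [← fromBlocks_toBlocks B, ← hbc]
    exact congruent_fromBlocks_schur _ _ _ ha_symm ha
  refine ⟨_, ?_, ?_, hcong⟩
  · exact (isSymm_fromBlocks_iff.mp (hcong.isSymm hA)).2.2.2
  · have := hcong.isUnit_det hdet
    rw [det_fromBlocks_zero₁₂] at this
    exact isUnit_of_mul_isUnit_right this

end Split

theorem congruent_smul_one_add (c : R) (a b : ℕ) :
    Congruent
      (fromBlocks (c • 1 : Matrix (Fin a) (Fin a) R) 0 0 (c • 1 : Matrix (Fin b) (Fin b) R))
      (c • 1 : Matrix (Fin (a + b)) (Fin (a + b)) R) :=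
  .of_submatrix_eq finSumFinEquiv <| by
    simp only [smul_one_eq_diagonal, submatrix_diagonal_equiv, fromBlocks_diagonal]
    congr 1
    ext (i | i) <;> rfl

theorem congruent_blockDiagonal_add {o : Type*} [Fintype o] [DecidableEq o] (X : Matrix o o R)
    (a b : ℕ) :
    Congruent
      (fromBlocks (blockDiagonal fun _ : Fin a => X) 0 0 (blockDiagonal fun _ : Fin b => X))
      (blockDiagonal fun _ : Fin (a + b) => X) :=
  .of_submatrix_eq ((Equiv.prodSumDistrib o (Fin a) (Fin b)).symm.trans
      (Equiv.prodCongr (Equiv.refl o) finSumFinEquiv)) <| by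
    ext (⟨i, k⟩ | ⟨i, k⟩) (⟨j, k'⟩ | ⟨j, k'⟩) <;>
      simp [blockDiagonal_apply, Fin.ext_iff] <;> omega

theorem exists_isUnit_apply_of_isUnit_det {S : Type*} [CommRing S] [Nontrivial S]
    [Fintype m] [DecidableEq m] [Nonempty m] (f : R →+* S)
    (hf : ∀ r, ¬IsUnit r → f r = 0) {A : Matrix m m R} (hA : IsUnit A.det) :
    ∃ i j, IsUnit (A i j) := by
  by_contra! h
  have hmap : A.map f = 0 := by
    ext i j
    exact hf _ (h i j)
  have := hA.map f
  rw [RingHom.map_det, RingHom.mapMatrix_apply, hmap, det_zero] at this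
  exact not_isUnit_zero this

end Matrix

theorem congruent_standardForm_add (a₁ a₂ a₃ a₄ b₁ b₂ b₃ b₄ : ℕ) :
    Congruent (fromBlocks (standardForm a₁ a₂ a₃ a₄) 0 0 (standardForm b₁ b₂ b₃ b₄))
      (standardForm (a₁ + b₁) (a₂ + b₂) (a₃ + b₃) (a₄ + b₄)) := by
  unfold standardForm
  refine (congruent_fromBlocks_interchange _ _ _ _).trans (.fromBlocks ?_ ?_)
  · refine (congruent_fromBlocks_interchange _ _ _ _).trans (.fromBlocks ?_ ?_)
    · simpa using congruent_smul_one_add (1 : ZMod 4) a₁ b₁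
    · exact congruent_smul_one_add _ _ _
  · refine (congruent_fromBlocks_interchange _ _ _ _).trans (.fromBlocks ?_ ?_) <;>
      exact congruent_blockDiagonal_add _ _ _

def HasStandardForm {m : Type*} [Fintype m] [DecidableEq m] (A : Matrix m m (ZMod 4)) : Prop :=
  ∃ n₁ n₂ n₃ n₄ : ℕ, Congruent A (standardForm n₁ n₂ n₃ n₄)

section HasStandardForm

variable {m n : Type*} [Fintype m] [DecidableEq m] [Fintype n] [DecidableEq n]

theorem HasStandardForm.of_congruent {A : Matrix m m (ZMod 4)} {B : Matrix n n (ZMod 4)}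
    (h : Congruent A B) (hB : HasStandardForm B) : HasStandardForm A :=
  let ⟨_, _, _, _, hB⟩ := hB
  ⟨_, _, _, _, h.trans hB⟩

theorem HasStandardForm.fromBlocks {A : Matrix m m (ZMod 4)} {B : Matrix n n (ZMod 4)}
    (hA : HasStandardForm A) (hB : HasStandardForm B) :
    HasStandardForm (fromBlocks A 0 0 B) :=
  let ⟨_, _, _, _, hA⟩ := hA
  let ⟨_, _, _, _, hB⟩ := hB
  ⟨_, _, _, _, (hA.fromBlocks hB).trans (congruent_standardForm_add _ _ _ _ _ _ _ _)⟩

theorem hasStandardForm_of_isEmpty [IsEmpty m] (A : Matrix m m (ZMod 4)) : HasStandardForm A :=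
  ⟨0, 0, 0, 0, .of_submatrix_eq (Equiv.equivOfIsEmpty _ _) (Subsingleton.elim _ _)⟩

end HasStandardForm

theorem ZMod.four_eq_one_or_three_of_isUnit : ∀ u : ZMod 4, IsUnit u → u = 1 ∨ u = 3 := by
  decide

theorem hasStandardForm_fin_one {M : Matrix (Fin 1) (Fin 1) (ZMod 4)} (h : IsUnit (M 0 0)) :
    HasStandardForm M := by
  have hM : M = !![M 0 0] := by
    ext i j
    simp [Subsingleton.elim i 0, Subsingleton.elim j 0]
  rcases ZMod.four_eq_one_or_three_of_isUnit _ h with h1 | h3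
  · rw [hM, h1]
    exact ⟨1, 0, 0, 0, .of_submatrix_eq (.ofBijective (fun _ => .inl (.inl 0)) (by decide))
      (by decide)⟩
  · rw [hM, h3]
    exact ⟨0, 1, 0, 0, .of_submatrix_eq (.ofBijective (fun _ => .inl (.inr 0)) (by decide))
      (by decide)⟩

theorem hasStandardForm_Hm : HasStandardForm Hm :=
  ⟨0, 0, 1, 0, .of_submatrix_eq (.ofBijective (fun i => .inr (.inl (i, 0))) (by decide))
    (by decide)⟩

theorem hasStandardForm_M2 : HasStandardForm M2 :=
  ⟨0, 0, 0, 1, .of_submatrix_eq (.ofBijective (fun i => .inr (.inr (i, 0))) (by decide))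
    (by decide)⟩

set_option synthInstance.maxSize 256 in
set_option maxRecDepth 100000 in
theorem exists_congruent_Hm_or_M2 : ∀ a b c : ZMod 4, ¬IsUnit a → IsUnit b → ¬IsUnit c →
    (∃ P : Matrix (Fin 2) (Fin 2) (ZMod 4), IsUnit P.det ∧ Pᵀ * !![a, b; b, c] * P = Hm) ∨
    (∃ P : Matrix (Fin 2) (Fin 2) (ZMod 4), IsUnit P.det ∧ Pᵀ * !![a, b; b, c] * P = M2) := by
  decide

theorem isUnit_det_of_not_isUnit_diag {M : Matrix (Fin 2) (Fin 2) (ZMod 4)} (hM : M.IsSymm)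
    (h₀ : ¬IsUnit (M 0 0)) (h₀₁ : IsUnit (M 0 1)) (h₁ : ¬IsUnit (M 1 1)) : IsUnit M.det := by
  rw [det_fin_two, hM.apply 0 1]
  revert h₀ h₀₁ h₁
  generalize M 0 0 = a, M 0 1 = b, M 1 1 = c
  revert a b c
  decide

theorem hasStandardForm_of_not_isUnit_diag {M : Matrix (Fin 2) (Fin 2) (ZMod 4)}
    (hM : M.IsSymm) (h₀ : ¬IsUnit (M 0 0)) (h₀₁ : IsUnit (M 0 1)) (h₁ : ¬IsUnit (M 1 1)) :
    HasStandardForm M := by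
  rw [eta_fin_two M, hM.apply 0 1]
  rcases exists_congruent_Hm_or_M2 _ _ _ h₀ h₀₁ h₁ with ⟨P, hP, hPMP⟩ | ⟨P, hP, hPMP⟩
  · exact hasStandardForm_Hm.of_congruent ⟨.refl _, P, hP, hPMP⟩
  · exact hasStandardForm_M2.of_congruent ⟨.refl _, P, hP, hPMP⟩

theorem ZMod.castHom_two_eq_zero_of_not_isUnit :
    ∀ u : ZMod 4, ¬IsUnit u → ZMod.castHom (by norm_num : 2 ∣ 4) (ZMod 2) u = 0 := by
  decide

theorem hasStandardForm_of_isSymm {m : Type*} [Fintype m] [DecidableEq m]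
    {A : Matrix m m (ZMod 4)} (hA : A.IsSymm) (hdet : IsUnit A.det) : HasStandardForm A := by
  induction hN : Fintype.card m using Nat.strong_induction_on generalizing m with
  | _ N ih =>
  have split : ∀ {α : Type} [Fintype α] [DecidableEq α] [Nonempty α] (f : α → m),
      Function.Injective f → IsUnit (A.submatrix f f).det →
      HasStandardForm (A.submatrix f f) → HasStandardForm A := by
    intro α _ _ _ f hf hfdet hfstd
    let e : α ⊕ {x // x ∉ Set.range f} ≃ m :=
      (Equiv.sumCongr (Equiv.ofInjective f hf) (Equiv.refl _)).trans (Equiv.sumCompl _)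
    obtain ⟨S, hS, hSdet, hcong⟩ := exists_congruent_fromBlocks_submatrix hA hdet e hfdet
    have hcard : Fintype.card {x // x ∉ Set.range f} < N := by
      have := Fintype.card_congr e
      rw [Fintype.card_sum] at this
      have := Fintype.card_pos (α := α)
      omega
    exact .of_congruent hcong (hfstd.fromBlocks (ih _ hcard hS hSdet rfl))
  cases isEmpty_or_nonempty m
  · exact hasStandardForm_of_isEmpty A
  by_cases hdiag : ∃ i, IsUnit (A i i)
  · obtain ⟨i, hi⟩ := hdiag
    exact split (fun _ : Fin 1 => i) (Function.injective_of_subsingleton _)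
      (by simpa [det_unique] using hi) (hasStandardForm_fin_one hi)
  · push Not at hdiag
    obtain ⟨i, j, hij⟩ := exists_isUnit_apply_of_isUnit_det _
      ZMod.castHom_two_eq_zero_of_not_isUnit hdet
    have hne : i ≠ j := by
      rintro rfl
      exact hdiag i hij
    exact split ![i, j] (by simpa [Function.Injective, Fin.forall_fin_two] using ⟨hne, hne.symm⟩)
      (isUnit_det_of_not_isUnit_diag (hA.submatrix _) (hdiag i) hij (hdiag j))
      (hasStandardForm_of_not_isUnit_diag (hA.submatrix _) (hdiag i) hij (hdiag j))

/-- Every symmetric matrix over `ℤ/4ℤ` with invertible determinant is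
congruent to a block-diagonal matrix built from `n₁` entries `1`, `n₂` entries `3`,
`n₃` blocks `H` and `n₄` blocks `M₂`, with `n = n₁ + n₂ + 2n₃ + 2n₄`. -/
theorem stmt_8 (n : ℕ) (A : Matrix (Fin n) (Fin n) (ZMod 4))
    (hsymm : A.IsSymm) (hdet : IsUnit A.det) :
    ∃ (n₁ n₂ n₃ n₄ : ℕ), n = n₁ + n₂ + 2 * n₃ + 2 * n₄ ∧
      ∃ (e : Fin n ≃ ((Fin n₁ ⊕ Fin n₂) ⊕ ((Fin 2 × Fin n₃) ⊕ (Fin 2 × Fin n₄))))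
        (P : Matrix (Fin n) (Fin n) (ZMod 4)),
        IsUnit P.det ∧
        Pᵀ * A * P = (standardForm n₁ n₂ n₃ n₄).submatrix e e := by
  obtain ⟨n₁, n₂, n₃, n₄, e, hcong⟩ := hasStandardForm_of_isSymm hsymm hdet
  refine ⟨n₁, n₂, n₃, n₄, ?_, e, hcong⟩
  simpa [Fintype.card_sum, Fintype.card_prod, mul_comm, add_assoc] using Fintype.card_congr e
end

section
/- (Purity theorem) Let n : ℕ and let A be a symmetric n×n matrix over ℤ/4ℤ with IsUnit A.det. Then the Gauss sum S(A) satisfies Complex.normSq (S(A)) = 2^(3·n), i.e. |S(A)| = 2^(3n/2). -/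
/-!
Write `Q x = xᵀAx` and `S = ∑ₓ ψ(Q x)` for the character `ψ a = i^a` of `ℤ/4ℤ`. Substituting
`x = y + z` in `|S|² = ∑_{x,y} ψ(Q x - Q y)` and using `Q (y + z) - Q y = Q z + 2 yᵀAz` gives
`|S|² = ∑_z ψ(Q z) ∑_y ψ(yᵀA(2z))`. The inner sum is an orthogonality sum: it is `4ⁿ` if
`A(2z) = 0` and `0` otherwise. Since `A` is invertible, `A(2z) = 0` means `2z = 0`, so every
entry of `z` lies in `{0, 2}`; then `Q z = 0`, and there are `2ⁿ` such `z`. Hence `|S|² = 4ⁿ 2ⁿ`.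
-/

open Matrix

lemma AddChar.map_sum_eq_prod {A M ι : Type*} [AddCommMonoid A] [CommMonoid M] (ψ : AddChar A M)
    (s : Finset ι) (f : ι → A) : ψ (∑ i ∈ s, f i) = ∏ i ∈ s, ψ (f i) :=
  map_prod ψ.toMonoidHom (fun i => Multiplicative.ofAdd (f i)) s

section QuadraticGaussSum

variable {R : Type*} [CommRing R] {ι : Type*} [Fintype ι]

def Matrix.gaussSum [Fintype R] [DecidableEq ι] (ψ : AddChar R ℂ) (A : Matrix ι ι R) : ℂ :=
  ∑ x, ψ (x ⬝ᵥ A *ᵥ x)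

lemma Matrix.IsSymm.dotProduct_mulVec_add_self {A : Matrix ι ι R} (hA : A.IsSymm) (y z : ι → R) :
    (y + z) ⬝ᵥ A *ᵥ (y + z) = y ⬝ᵥ A *ᵥ y + z ⬝ᵥ A *ᵥ z + 2 * (y ⬝ᵥ A *ᵥ z) := by
  have hswap : z ⬝ᵥ A *ᵥ y = y ⬝ᵥ A *ᵥ z := by
    rw [dotProduct_mulVec, ← mulVec_transpose, hA.eq, dotProduct_comm]
  simp only [mulVec_add, dotProduct_add, add_dotProduct, hswap]
  ring

lemma AddChar.sum_dotProduct [Fintype R] [DecidableEq R] [DecidableEq ι] {R' : Type*}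
    [CommRing R'] [IsDomain R'] {ψ : AddChar R R'} (hψ : ψ.IsPrimitive) (w : ι → R) :
    ∑ y : ι → R, ψ (y ⬝ᵥ w) = if w = 0 then (Fintype.card R : R') ^ Fintype.card ι else 0 := by
  simp only [dotProduct, AddChar.map_sum_eq_prod]
  rw [← Fintype.prod_sum (fun i c => ψ (c * w i))]
  simp only [AddChar.sum_mulShift _ hψ, Nat.cast_ite, Nat.cast_zero, Finset.prod_ite_zero,
    Finset.prod_const, Finset.card_univ, funext_iff, Pi.zero_apply, Finset.mem_univ, true_imp_iff]

lemma Matrix.IsSymm.normSq_gaussSum [Fintype R] [DecidableEq R] [DecidableEq ι]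
    {ψ : AddChar R ℂ} (hψ : ψ.IsPrimitive) {A : Matrix ι ι R} (hA : A.IsSymm) :
    (Complex.normSq (A.gaussSum ψ) : ℂ) =
      (Fintype.card R : ℂ) ^ Fintype.card ι * ∑ z with A *ᵥ (2 • z) = 0, ψ (z ⬝ᵥ A *ᵥ z) := by
  have hshift (y z : ι → R) :
      ψ ((y + z) ⬝ᵥ A *ᵥ (y + z)) * starRingEnd ℂ (ψ (y ⬝ᵥ A *ᵥ y)) =
        ψ (z ⬝ᵥ A *ᵥ z) * ψ (y ⬝ᵥ A *ᵥ (2 • z)) := by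
    rw [← AddChar.map_neg_eq_conj, ← AddChar.map_add_eq_mul, ← AddChar.map_add_eq_mul,
      hA.dotProduct_mulVec_add_self, mulVec_smul, dotProduct_smul, two_nsmul, two_mul]
    congr 1
    ring
  calc (Complex.normSq (A.gaussSum ψ) : ℂ)
      = ∑ y, ∑ z, ψ ((y + z) ⬝ᵥ A *ᵥ (y + z)) * starRingEnd ℂ (ψ (y ⬝ᵥ A *ᵥ y)) := by
        rw [← Complex.mul_conj, gaussSum, map_sum, Finset.sum_mul_sum, Finset.sum_comm]
        exact Fintype.sum_congr _ _ fun y => (Equiv.sum_comp (Equiv.addLeft y) _).symm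
    _ = ∑ z, ψ (z ⬝ᵥ A *ᵥ z) * ∑ y, ψ (y ⬝ᵥ A *ᵥ (2 • z)) := by
        simp only [hshift, Finset.mul_sum]
        exact Finset.sum_comm
    _ = _ := by
        rw [Finset.mul_sum, Finset.sum_filter]
        refine Fintype.sum_congr _ _ fun z => ?_
        rw [AddChar.sum_dotProduct hψ]
        split_ifs <;> simp [mul_comm]

end QuadraticGaussSum

section ZModFour

variable {ι : Type*} [Fintype ι]

lemma ZMod.mul_eq_zero_of_two_nsmul_eq_zero {a b : ZMod 4} (ha : 2 • a = 0) (hb : 2 • b = 0) :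
    a * b = 0 := by
  revert a b; decide

lemma Matrix.dotProduct_mulVec_self_eq_zero_of_two_nsmul_eq_zero (A : Matrix ι ι (ZMod 4))
    {z : ι → ZMod 4} (hz : 2 • z = 0) : z ⬝ᵥ A *ᵥ z = 0 := by
  have hz' (i : ι) : 2 • z i = 0 := congrFun hz i
  simp only [dotProduct, mulVec, Finset.mul_sum]
  refine Finset.sum_eq_zero fun i _ => Finset.sum_eq_zero fun j _ => ?_
  rw [mul_left_comm, ZMod.mul_eq_zero_of_two_nsmul_eq_zero (hz' i) (hz' j), mul_zero]

lemma card_two_nsmul_eq_zero_zmod_four [DecidableEq ι] :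
    ({z | 2 • z = 0} : Finset (ι → ZMod 4)).card = 2 ^ Fintype.card ι := by
  have : ({z | 2 • z = 0} : Finset (ι → ZMod 4)) =
      Fintype.piFinset fun _ => ({c | 2 • c = 0} : Finset (ZMod 4)) := by
    ext z
    simp [funext_iff]
  have hcard : ({c | 2 • c = 0} : Finset (ZMod 4)).card = 2 := by decide
  rw [this, Fintype.card_piFinset, hcard, Finset.prod_const, Finset.card_univ]

end ZModFour

/-- Purity theorem.  For a symmetric matrix `A` over `ℤ/4ℤ` with invertible
determinant, the Gauss sum `S(A) = ∑_x i^(xᵀAx).val` satisfies `|S(A)|² = 2^(3n)`. -/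
theorem stmt_10 (n : ℕ) (A : Matrix (Fin n) (Fin n) (ZMod 4))
    (hsymm : A.IsSymm) (hdet : IsUnit A.det) :
    Complex.normSq
        (∑ x : Fin n → ZMod 4, Complex.I ^ (dotProduct x (A.mulVec x)).val)
      = 2 ^ (3 * n) := by
  let ψ : AddChar (ZMod 4) ℂ := AddChar.zmodChar 4 Complex.I_pow_four
  have hψ : ψ.IsPrimitive :=
    AddChar.zmodChar_primitive_of_primitive_root 4 Complex.isPrimitiveRoot_I
  have hker (z : Fin n → ZMod 4) : A *ᵥ (2 • z) = 0 ↔ 2 • z = 0 :=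
    (mulVec_injective_of_isUnit ((isUnit_iff_isUnit_det A).mpr hdet)).eq_iff' (mulVec_zero A)
  have hsum : ∑ z with A *ᵥ (2 • z) = 0, ψ (z ⬝ᵥ A *ᵥ z) = 2 ^ n := by
    simp_rw [hker]
    rw [Finset.sum_congr rfl fun z hz => by
      rw [A.dotProduct_mulVec_self_eq_zero_of_two_nsmul_eq_zero (Finset.mem_filter.mp hz).2,
        AddChar.map_zero_eq_one]]
    rw [Finset.sum_const, card_two_nsmul_eq_zero_zmod_four, Fintype.card_fin, nsmul_one]
    norm_cast
  have h8 : ((4 : ℕ) : ℂ) ^ n * 2 ^ n = 2 ^ (3 * n) := by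
    rw [← mul_pow, pow_mul]
    norm_num
  have key := hsymm.normSq_gaussSum hψ
  rw [hsum, ZMod.card, Fintype.card_fin, h8] at key
  simp only [Matrix.gaussSum, ψ, AddChar.zmodChar_apply] at key
  exact_mod_cast key
end

section
/- Let n : ℕ and let A be a symmetric n×n matrix over ℤ/4ℤ with IsUnit A.det. If 4 ∣ n and A.det = 1, then the Gauss sum satisfies S(A)² = 2^(3·n). -/
/-!
Completing the square with Schur complements, a symmetric matrix over `ℤ/4ℤ` with unit
determinant is congruent to an orthogonal sum of `1 × 1` unit blocks and `2 × 2` blocks with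
even diagonal and unit off-diagonal entry. The Gauss sum is invariant under congruence and
multiplicative over orthogonal sums, and a direct evaluation gives `S(B)² = 8ʳ iʳ χ₄(det B)`
for each block of size `r`. Hence `S(A)² = 8ⁿ iⁿ χ₄(det A)`, which is `2³ⁿ` when `4 ∣ n` and
`det A = 1`.
-/

open Matrix

section QuadraticGaussSum

variable {α R : Type*} [CommRing α] [Fintype α] [CommRing R]
variable {k l m : Type*} [Fintype k] [Fintype l] [Fintype m]
  [DecidableEq k] [DecidableEq l] [DecidableEq m]

def quadraticGaussSum (ψ : AddChar α R) (A : Matrix m m α) : R :=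
  ∑ x : m → α, ψ (x ⬝ᵥ A *ᵥ x)

variable (ψ : AddChar α R)

lemma quadraticGaussSum_of_isEmpty [IsEmpty m] (A : Matrix m m α) :
    quadraticGaussSum ψ A = 1 := by
  simp [quadraticGaussSum]

lemma map_quadraticGaussSum {S : Type*} [CommRing S] (f : R →+* S) (A : Matrix m m α) :
    f (quadraticGaussSum ψ A) = quadraticGaussSum (f.toMonoidHom.compAddChar ψ) A :=
  map_sum f _ _

lemma quadraticGaussSum_submatrix_equiv (A : Matrix m m α) (e : l ≃ m) :
    quadraticGaussSum ψ (A.submatrix e e) = quadraticGaussSum ψ A := by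
  rw [quadraticGaussSum, ← (e.arrowCongr (Equiv.refl α)).symm.sum_comp]
  refine Fintype.sum_congr _ _ fun y => ?_
  change ψ (y ∘ e ⬝ᵥ A.submatrix e e *ᵥ (y ∘ e)) = _
  rw [submatrix_mulVec_equiv, Function.comp_assoc, e.self_comp_symm, Function.comp_id,
    comp_equiv_dotProduct_comp_equiv]

lemma quadraticGaussSum_transpose_mul_mul (A P : Matrix m m α) (hP : IsUnit P.det) :
    quadraticGaussSum ψ (Pᵀ * A * P) = quadraticGaussSum ψ A := by
  have hP' : IsUnit P := (isUnit_iff_isUnit_det P).2 hP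
  have hbij : Function.Bijective P.mulVec :=
    ⟨mulVec_injective_of_isUnit hP', mulVec_surjective_iff_isUnit.2 hP'⟩
  refine Eq.trans (Fintype.sum_congr _ _ fun x => ?_) (hbij.sum_comp fun y => ψ (y ⬝ᵥ A *ᵥ y))
  rw [← mulVec_mulVec, ← mulVec_mulVec, dotProduct_mulVec, vecMul_transpose]

lemma quadraticGaussSum_fromBlocks_zero (B : Matrix k k α) (C : Matrix l l α) :
    quadraticGaussSum ψ (fromBlocks B 0 0 C) = quadraticGaussSum ψ B * quadraticGaussSum ψ C := by
  rw [quadraticGaussSum, quadraticGaussSum, quadraticGaussSum, Finset.sum_mul_sum,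
    ← Fintype.sum_prod_type', ← (Equiv.sumArrowEquivProdArrow k l α).symm.sum_comp]
  refine Fintype.sum_congr _ _ fun ⟨y, z⟩ => ?_
  change ψ (Sum.elim y z ⬝ᵥ fromBlocks B 0 0 C *ᵥ Sum.elim y z) = _
  simp only [fromBlocks_mulVec, Sum.elim_comp_inl, Sum.elim_comp_inr, zero_mulVec, add_zero,
    zero_add, sumElim_dotProduct_sumElim, AddChar.map_add_eq_mul]

theorem exists_isSymm_quadraticGaussSum_eq_mul {A : Matrix (k ⊕ l) (k ⊕ l) α} (hA : A.IsSymm)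
    (h : IsUnit A.toBlocks₁₁.det) :
    ∃ C : Matrix l l α, C.IsSymm ∧ A.det = A.toBlocks₁₁.det * C.det ∧
      quadraticGaussSum ψ A = quadraticGaussSum ψ A.toBlocks₁₁ * quadraticGaussSum ψ C := by
  obtain ⟨B, E, E', D, rfl⟩ : ∃ B E E' D, A = fromBlocks B E E' D :=
    ⟨_, _, _, _, (fromBlocks_toBlocks A).symm⟩
  obtain ⟨hB, rfl, -, hD⟩ := isSymm_fromBlocks_iff.1 hA
  rw [toBlocks_fromBlocks₁₁] at h ⊢
  let := B.invertibleOfIsUnitDet h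
  have hR : IsUnit (fromBlocks 1 (⅟B * E) 0 1 : Matrix (k ⊕ l) (k ⊕ l) α).det := by
    simp
  have hRt : (fromBlocks 1 (⅟B * E) 0 1 : Matrix (k ⊕ l) (k ⊕ l) α)ᵀ =
      fromBlocks 1 0 (Eᵀ * ⅟B) 1 := by
    simp [fromBlocks_transpose, transpose_mul, hB.inv.eq]
  refine ⟨D - Eᵀ * ⅟B * E, ?_, det_fromBlocks₁₁ .., ?_⟩
  · simp [IsSymm, transpose_mul, hB.inv.eq, hD.eq, Matrix.mul_assoc]
  · rw [fromBlocks_eq_of_invertible₁₁, ← hRt, quadraticGaussSum_transpose_mul_mul _ _ _ hR,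
      quadraticGaussSum_fromBlocks_zero]

end QuadraticGaussSum

open Complex ZMod

lemma GaussianInt.sqrtd_pow_four : (Zsqrtd.sqrtd : GaussianInt) ^ 4 = 1 := by decide

lemma GaussianInt.toComplex_sqrtd : GaussianInt.toComplex Zsqrtd.sqrtd = I := by
  simp [GaussianInt.toComplex_def]

def iChar : AddChar (ZMod 4) ℂ := AddChar.zmodChar 4 I_pow_four

lemma quadraticGaussSum_iChar_eq_toComplex {m : Type*} [Fintype m] [DecidableEq m]
    (A : Matrix m m (ZMod 4)) :
    quadraticGaussSum iChar A =
      GaussianInt.toComplex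
        (quadraticGaussSum (AddChar.zmodChar 4 GaussianInt.sqrtd_pow_four) A) := by
  rw [map_quadraticGaussSum]
  congr 1
  ext a
  simp [iChar, AddChar.zmodChar_apply, GaussianInt.toComplex_sqrtd]

lemma quadraticGaussSum_iChar_sq_fin_one {a : ZMod 4} (ha : IsUnit a) :
    quadraticGaussSum iChar !![a] ^ 2
      = 8 ^ 1 * I ^ 1 * χ₄ (!![a] : Matrix (Fin 1) (Fin 1) _).det := by
  -- `ℤ[i]` has decidable equality, so the Gauss sum can be evaluated there by `decide`.
  have key : ∀ a : ZMod 4, IsUnit a →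
      quadraticGaussSum (AddChar.zmodChar 4 GaussianInt.sqrtd_pow_four) !![a] ^ 2
        = 8 ^ 1 * Zsqrtd.sqrtd ^ 1 * (χ₄ a : GaussianInt) := by decide
  rw [quadraticGaussSum_iChar_eq_toComplex, ← map_pow, key a ha, det_fin_one_of]
  simp only [map_mul, map_pow, map_ofNat, map_intCast, GaussianInt.toComplex_sqrtd]

lemma isUnit_det_and_quadraticGaussSum_iChar_sq_fin_two {a b c : ZMod 4}
    (ha : ¬IsUnit a) (hc : ¬IsUnit c) (hb : IsUnit b) :
    IsUnit !![a, b; b, c].det ∧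
      quadraticGaussSum iChar !![a, b; b, c] ^ 2 = 8 ^ 2 * I ^ 2 * χ₄ !![a, b; b, c].det := by
  have key : ∀ a b c : ZMod 4, ¬IsUnit a → ¬IsUnit c → IsUnit b →
      IsUnit (a * c - b * b) ∧
        quadraticGaussSum (AddChar.zmodChar 4 GaussianInt.sqrtd_pow_four) !![a, b; b, c] ^ 2
          = 8 ^ 2 * Zsqrtd.sqrtd ^ 2 * (χ₄ (a * c - b * b) : GaussianInt) := by decide
  obtain ⟨hdet, hsq⟩ := key a b c ha hc hb
  rw [quadraticGaussSum_iChar_eq_toComplex, ← map_pow, hsq, det_fin_two_of]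
  refine ⟨hdet, ?_⟩
  simp only [map_mul, map_pow, map_ofNat, map_intCast, GaussianInt.toComplex_sqrtd]

lemma exists_isUnit_apply {m : Type*} [Fintype m] [DecidableEq m] [Nonempty m]
    {A : Matrix m m (ZMod 4)} (h : IsUnit A.det) : ∃ i j, IsUnit (A i j) := by
  by_contra! hA
  -- reduction mod 2 kills every non-unit of `ℤ/4ℤ`, hence would kill `det A`
  let π := ZMod.castHom (show 2 ∣ 4 by norm_num) (ZMod 2)
  have hπ : ∀ a : ZMod 4, ¬IsUnit a → π a = 0 := by decide
  have hA2 : A.map π = 0 := by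
    ext i j
    exact hπ _ (hA i j)
  simpa [RingHom.map_det, hA2] using h.map π

lemma exists_embedding_fin_quadraticGaussSum_iChar_sq {m : Type*} [Fintype m] [DecidableEq m]
    [Nonempty m] {A : Matrix m m (ZMod 4)} (hA : A.IsSymm) (h : IsUnit A.det) :
    ∃ (r : ℕ) (f : Fin r ↪ m), 0 < r ∧ IsUnit (A.submatrix f f).det ∧
      quadraticGaussSum iChar (A.submatrix f f) ^ 2
        = 8 ^ r * I ^ r * χ₄ (A.submatrix f f).det := by
  by_cases hdiag : ∃ i, IsUnit (A i i)
  · obtain ⟨i, hi⟩ := hdiag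
    have hB : A.submatrix ![i] ![i] = !![A i i] := by
      ext a b; fin_cases a; fin_cases b; rfl
    refine ⟨1, ⟨![i], Function.injective_of_subsingleton _⟩, one_pos, ?_⟩
    simp only [Function.Embedding.coeFn_mk, hB]
    exact ⟨by rwa [det_fin_one_of], quadraticGaussSum_iChar_sq_fin_one hi⟩
  · push Not at hdiag
    obtain ⟨i, j, hij⟩ := exists_isUnit_apply h
    have hne : i ≠ j := by rintro rfl; exact hdiag i hij
    have hB : A.submatrix ![i, j] ![i, j] = !![A i i, A i j; A i j, A j j] := by
      ext a b; fin_cases a <;> fin_cases b <;> simp [hA.apply i j]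
    have hf : Function.Injective ![i, j] := by
      intro a b hab
      fin_cases a <;> fin_cases b
      all_goals first | rfl | simp_all
    refine ⟨2, ⟨![i, j], hf⟩, two_pos, ?_⟩
    simp only [Function.Embedding.coeFn_mk, hB]
    exact isUnit_det_and_quadraticGaussSum_iChar_sq_fin_two (hdiag i) (hdiag j) hij

theorem quadraticGaussSum_iChar_sq {m : Type*} [Fintype m] [DecidableEq m]
    {A : Matrix m m (ZMod 4)} (hA : A.IsSymm) (h : IsUnit A.det) :
    quadraticGaussSum iChar A ^ 2 = 8 ^ Fintype.card m * I ^ Fintype.card m * χ₄ A.det := by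
  induction hN : Fintype.card m using Nat.strong_induction_on generalizing m with
  | _ N ih =>
  subst hN
  cases isEmpty_or_nonempty m
  · simp [quadraticGaussSum_of_isEmpty]
  obtain ⟨r, f, hr, hBunit, hB⟩ := exists_embedding_fin_quadraticGaussSum_iChar_sq hA h
  classical
  let σ : Fin r ⊕ ↥(Set.range f)ᶜ ≃ m :=
    (Equiv.sumCongr (Equiv.ofInjective f f.injective) (Equiv.refl _)).trans
      (Equiv.Set.sumCompl _)
  have hblock : (A.submatrix σ σ).toBlocks₁₁ = A.submatrix f f := rfl
  obtain ⟨C, hC, hdet, hsum⟩ :=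
    exists_isSymm_quadraticGaussSum_eq_mul iChar (hA.submatrix σ) (hblock ▸ hBunit)
  rw [det_submatrix_equiv_self, hblock] at hdet
  rw [quadraticGaussSum_submatrix_equiv, hblock] at hsum
  have hcard : Fintype.card m = r + Fintype.card ↥(Set.range f)ᶜ := by
    simpa using (Fintype.card_congr σ).symm
  have hC' := ih _ (by omega) hC (isUnit_of_mul_isUnit_right (hdet ▸ h)) rfl
  rw [hsum, mul_pow, hB, hC', hdet, map_mul, hcard]
  push_cast
  ring

/-- For a symmetric matrix `A` over `ℤ/4ℤ` with invertible determinant, if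
`4 ∣ n` and `A.det = 1` (trivial discriminant), then the Gauss sum satisfies
`S(A)² = 2^(3n)`. -/
theorem stmt_14 (n : ℕ) (A : Matrix (Fin n) (Fin n) (ZMod 4))
    (hsymm : A.IsSymm) (hdet : IsUnit A.det)
    (hn : 4 ∣ n) (hdet1 : A.det = 1) :
    (∑ x : Fin n → ZMod 4, Complex.I ^ (dotProduct x (A.mulVec x)).val) ^ 2
      = 2 ^ (3 * n) := by
  have h := quadraticGaussSum_iChar_sq hsymm hdet
  rw [Fintype.card_fin, hdet1, map_one, Int.cast_one, mul_one] at h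
  obtain ⟨k, rfl⟩ := hn
  change quadraticGaussSum iChar A ^ 2 = _
  rw [h, pow_mul I, I_pow_four, one_pow, mul_one, pow_mul 2 3]
  norm_num
end

section
/- Let R be a commutative ring and I an ideal of R with I² = 0, and let π : R → R⧸I be the quotient map. Let l be a finite type with decidable equality. Then the reduction map on symplectic groups is surjective: for every matrix B ∈ Matrix.symplecticGroup l (R⧸I) (i.e. Bᵀ * J * B = J for the standard symplectic matrix J over R⧸I on index type l ⊕ l), there exists A ∈ Matrix.symplecticGroup l R whose entrywise image A.map π equals B. -/
/-!
Lift `B` entrywise to some `A`. The defect `E = Aᵀ J A - J` has entries in `I`, and since `J`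
is alternating so is `E`; hence `E = Yᵀ - Y` for a matrix `Y` with entries in `I`. Because
`I² = 0`, the first-order correction `A (1 - J Y)` is symplectic, and it still reduces to `B`.
-/

open Matrix

namespace Matrix

variable {n R : Type*} [Fintype n] [DecidableEq n]

theorem mul_eq_zero_of_mem_matrix [CommSemiring R] {I : Ideal R} (hI : I ^ 2 = ⊥)
    {M N : Matrix n n R} (hM : M ∈ I.matrix n) (hN : N ∈ I.matrix n) : M * N = 0 := by
  ext i j
  refine Finset.sum_eq_zero fun k _ => ?_
  simpa [hI] using (pow_two I ▸ Ideal.mul_mem_mul (hM i k) (hN k j) : M i k * N k j ∈ I ^ 2)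

theorem transpose_mem_matrix [Semiring R] {I : Ideal R} {M : Matrix n n R}
    (hM : M ∈ I.matrix n) : Mᵀ ∈ I.matrix n :=
  fun i j => hM j i

theorem map_quotient_mk_eq_zero_iff [CommRing R] {I : Ideal R} {M : Matrix n n R} :
    M.map (Ideal.Quotient.mk I) = 0 ↔ M ∈ I.matrix n := by
  simp [← Matrix.ext_iff, Ideal.Quotient.eq_zero_iff_mem]

/-- Matrices of the form `Zᵀ - Z` are alternating; their zero diagonal is what makes the
strictly upper triangular part a solution also when `2` is not invertible. -/
theorem exists_mem_matrix_transpose_sub_eq [LinearOrder n] [Ring R] {I : Ideal R}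
    (Z : Matrix n n R) (hZ : Zᵀ - Z ∈ I.matrix n) :
    ∃ Y ∈ I.matrix n, Yᵀ - Y = Zᵀ - Z := by
  refine ⟨of fun i j => if i < j then Z i j - Z j i else 0, fun i j => ?_, ?_⟩
  · by_cases h : i < j
    · simpa [h] using I.neg_mem (hZ i j)
    · simp [h]
  · ext i j
    rcases lt_trichotomy i j with h | rfl | h
    · simp [h, h.not_gt]
    · simp
    · simp [h, h.not_gt]

variable (l R : Type*) [DecidableEq l] [CommRing R]

theorem J_eq_transpose_sub : J l R = (fromBlocks 0 1 0 0)ᵀ - fromBlocks 0 1 0 0 := by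
  simp [J, fromBlocks_transpose, sub_eq_add_neg, fromBlocks_neg, fromBlocks_add]

variable {l R}

theorem exists_transpose_mul_J_mul_sub_J_eq [Fintype l] (A : Matrix (l ⊕ l) (l ⊕ l) R) :
    ∃ Z, Aᵀ * J l R * A - J l R = Zᵀ - Z := by
  set Y : Matrix (l ⊕ l) (l ⊕ l) R := fromBlocks 0 1 0 0
  refine ⟨Aᵀ * Y * A - Y, ?_⟩
  rw [J_eq_transpose_sub, transpose_sub, transpose_mul, transpose_mul, transpose_transpose]
  noncomm_ring

/-- `X := -J Y` satisfies `J X = Y` and `Xᵀ J = -Yᵀ`, so `(1 + X)ᵀ (J + E) (1 + X)` equals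
`J + E + Y - Yᵀ = J` up to products of two matrices with entries in `I`. -/
theorem mul_one_sub_J_mul_mem_symplecticGroup [Fintype l] {I : Ideal R} (hI : I ^ 2 = ⊥)
    {A Y : Matrix (l ⊕ l) (l ⊕ l) R} (hY : Y ∈ I.matrix (l ⊕ l))
    (hA : Aᵀ * J l R * A - J l R = Yᵀ - Y) :
    A * (1 - J l R * Y) ∈ symplecticGroup l R := by
  set E := Aᵀ * J l R * A - J l R
  set X := -(J l R * Y)
  have hJX : J l R * X = Y := by
    rw [mul_neg, ← Matrix.mul_assoc, J_squared, neg_one_mul, neg_neg]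
  have hXJ : Xᵀ * J l R = -Yᵀ := by
    rw [transpose_neg, transpose_mul, J_transpose, mul_neg, neg_neg, Matrix.mul_assoc,
      J_squared, mul_neg, mul_one]
  have hX : X ∈ I.matrix _ := neg_mem (Ideal.mul_mem_left _ _ hY)
  have hXt := transpose_mem_matrix hX
  have hE : E ∈ I.matrix _ := hA ▸ Ideal.sub_mem _ (transpose_mem_matrix hY) hY
  rw [SymplecticGroup.mem_iff', sub_eq_add_neg (1 : Matrix _ _ R)]
  calc (A * (1 + X))ᵀ * J l R * (A * (1 + X))
      = (1 + Xᵀ) * (J l R + E) * (1 + X) := by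
        rw [transpose_mul, transpose_add, transpose_one]
        simp only [E]
        noncomm_ring
    _ = J l R + E + J l R * X + Xᵀ * J l R
          + (Xᵀ * E + E * X + Xᵀ * (J l R * X) + Xᵀ * (E * X)) := by noncomm_ring
    _ = J l R := by
        rw [mul_eq_zero_of_mem_matrix hI hXt hE, mul_eq_zero_of_mem_matrix hI hE hX, hJX,
          mul_eq_zero_of_mem_matrix hI hXt hY, Matrix.mul_zero, hXJ, hA]
        abel

end Matrix

/-- For a commutative ring `R` and an ideal `I` with `I² = 0`, every
symplectic matrix over `R⧸I` lifts to a symplectic matrix over `R`: the reduction map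
`Sp(l, R) → Sp(l, R⧸I)` is surjective. -/
theorem stmt_17 (R : Type*) [CommRing R] (I : Ideal R) (hI : I ^ 2 = ⊥)
    (l : Type*) [Fintype l] [DecidableEq l]
    (B : Matrix (l ⊕ l) (l ⊕ l) (R ⧸ I)) (hB : B ∈ Matrix.symplecticGroup l (R ⧸ I)) :
    ∃ A ∈ Matrix.symplecticGroup l R, A.map (Ideal.Quotient.mk I) = B := by
  obtain ⟨A, rfl⟩ : ∃ A : Matrix (l ⊕ l) (l ⊕ l) R, A.map (Ideal.Quotient.mk I) = B :=
    ⟨B.map (Function.surjInv Ideal.Quotient.mk_surjective), by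
      ext; simp [Function.surjInv_eq]⟩
  have hE : Aᵀ * J l R * A - J l R ∈ I.matrix _ := by
    rw [← map_quotient_mk_eq_zero_iff, Matrix.map_sub _ (map_sub _), Matrix.map_mul,
      Matrix.map_mul, transpose_map, map_J, sub_eq_zero, ← SymplecticGroup.mem_iff']
    exact hB
  let : LinearOrder (l ⊕ l) := LinearOrder.lift' _ (Fintype.equivFin (l ⊕ l)).injective
  obtain ⟨Z, hZ⟩ := exists_transpose_mul_J_mul_sub_J_eq A
  obtain ⟨Y, hY, hYZ⟩ := exists_mem_matrix_transpose_sub_eq Z (hZ ▸ hE)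
  refine ⟨A * (1 - J l R * Y),
    mul_one_sub_J_mul_mem_symplecticGroup hI hY (hZ.trans hYZ.symm), ?_⟩
  rw [Matrix.map_mul, Matrix.map_sub _ (map_sub _),
    map_quotient_mk_eq_zero_iff.mpr (Ideal.mul_mem_left _ _ hY),
    Matrix.map_one _ (map_zero _) (map_one _), sub_zero, Matrix.mul_one]
end
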